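/- arXiv:2503.14666 — 10 statements merged into one kernel-verified Lean document; each statement's English description precedes it below -/
import Mathlib

section
/- For every fixed z ∈ [0, u_max], the function s ↦ g(s, z) is convex on the interval 𝒞_a = [0, (2u* + u_max)/4]. (This is the convexity of the controllable part of dV/dt with respect to the left boundary value u(t,a).) -/
/-- Convexity of the controllable part of `dV/dt` with respect to the left
boundary value: for every fixed `z ∈ [0, u_max]`, the function `s ↦ g(s, z)`
is convex on `𝒞_a = [0, (2u* + u_max)/4]`. -/
theorem g_convex_left_boundary
    (umax ustar : ℝ) (f F : ℝ → ℝ) (g : ℝ → ℝ → ℝ)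
    (humax : 0 < umax)
    (hustar : ustar ∈ Set.Icc (0 : ℝ) umax)
    (hf : ∀ u : ℝ, f u = u * (1 - u / umax))
    (hF : ∀ u : ℝ, F u = u ^ 2 / 2 - u ^ 3 / (3 * umax))
    (hg : ∀ s z : ℝ, g s z = (s - ustar) * f s - (z - ustar) * f z - F s + F z) :
    ∀ z ∈ Set.Icc (0 : ℝ) umax,
      ConvexOn ℝ (Set.Icc (0 : ℝ) ((2 * ustar + umax) / 4)) (fun s => g s z) := by
  intro z hz
  have hu : umax ≠ 0 := ne_of_gt humax
  set A : ℝ := 1 / 2 + ustar / umax with hA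
  set B : ℝ := -(2 / (3 * umax)) with hB
  set K : ℝ := -(z - ustar) * (z * (1 - z / umax)) + (z ^ 2 / 2 - z ^ 3 / (3 * umax)) with hK
  have heq : (fun s => g s z) = fun s => A * s ^ 2 + B * s ^ 3 + (-ustar) * s + K := by
    funext s
    rw [hg, hf, hf, hF, hF, hA, hB, hK]
    field_simp
    ring
  rw [heq]
  have hd1 : ∀ x : ℝ, HasDerivAt (fun s : ℝ => A * s ^ 2 + B * s ^ 3 + (-ustar) * s + K)
      (A * (2 * x) + B * (3 * x ^ 2) + (-ustar)) x := by
    intro x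
    have h2 : HasDerivAt (fun s : ℝ => s ^ 2) (2 * x) x := by
      simpa using hasDerivAt_pow 2 x
    have h3 : HasDerivAt (fun s : ℝ => s ^ 3) (3 * x ^ 2) x := by
      simpa using hasDerivAt_pow 3 x
    have h1 : HasDerivAt (fun s : ℝ => s) 1 x := hasDerivAt_id x
    simpa using (((h2.const_mul A).add (h3.const_mul B)).add
      ((h1.const_mul (-ustar)))).add_const K
  have hd2 : ∀ x : ℝ, HasDerivAt (fun x : ℝ => A * (2 * x) + B * (3 * x ^ 2) + (-ustar))
      (2 * A + 6 * B * x) x := by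
    intro x
    have h2 : HasDerivAt (fun s : ℝ => s ^ 2) (2 * x) x := by
      simpa using hasDerivAt_pow 2 x
    have h1 : HasDerivAt (fun s : ℝ => 2 * s) 2 (x := x) := by
      simpa using (hasDerivAt_id x).const_mul 2
    have h3 : HasDerivAt (fun s : ℝ => 3 * s ^ 2) (3 * (2 * x)) x := h2.const_mul 3
    have := ((h1.const_mul A).add (h3.const_mul B)).add_const (-ustar)
    exact this.congr_deriv (by ring)
  apply convexOn_of_hasDerivWithinAt2_nonneg (convex_Icc _ _)
    (Continuous.continuousOn (by continuity))
    (fun x _ => (hd1 x).hasDerivWithinAt)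
    (fun x _ => (hd2 x).hasDerivWithinAt)
  intro x hx
  rw [interior_Icc] at hx
  have hx2 : x ≤ (2 * ustar + umax) / 4 := le_of_lt hx.2
  have h0 : 0 ≤ ustar := hustar.1
  have : 2 * A + 6 * B * x = (umax + 2 * ustar - 4 * x) / umax := by
    rw [hA, hB]; field_simp; ring
  rw [this]
  apply div_nonneg _ humax.le
  nlinarith
end

section
/- For every fixed s ∈ [0, u_max], the function z ↦ g(s, z) is convex on the interval 𝒞_b = [(2u* + u_max)/4, u_max]. (This is the convexity of the controllable part of dV/dt with respect to the right boundary value u(t,b).) -/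
/-- Convexity of the controllable part of `dV/dt` with respect to the right
boundary value: for every fixed `s ∈ [0, u_max]`, the function `z ↦ g(s, z)`
is convex on `𝒞_b = [(2u* + u_max)/4, u_max]`. -/
theorem g_convex_right_boundary
    (umax ustar : ℝ) (f F : ℝ → ℝ) (g : ℝ → ℝ → ℝ)
    (humax : 0 < umax)
    (hustar : ustar ∈ Set.Icc (0 : ℝ) umax)
    (hf : ∀ u : ℝ, f u = u * (1 - u / umax))
    (hF : ∀ u : ℝ, F u = u ^ 2 / 2 - u ^ 3 / (3 * umax))
    (hg : ∀ s z : ℝ, g s z = (s - ustar) * f s - (z - ustar) * f z - F s + F z) :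
    ∀ s ∈ Set.Icc (0 : ℝ) umax,
      ConvexOn ℝ (Set.Icc ((2 * ustar + umax) / 4) umax) (fun z => g s z) := by
  intro s _
  have hu : umax ≠ 0 := ne_of_gt humax
  have hkey : (fun z => g s z) =
      fun z => ((s - ustar) * f s - F s) + ustar * z
        - (1 / 2 + ustar / umax) * z ^ 2 + (2 / (3 * umax)) * z ^ 3 := by
    funext z
    rw [hg, hf z, hF z]
    field_simp
    ring
  rw [hkey]
  set C := (s - ustar) * f s - F s with hC
  set q : ℝ → ℝ := fun z => C + ustar * z - (1 / 2 + ustar / umax) * z ^ 2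
      + (2 / (3 * umax)) * z ^ 3 with hq
  have hq' : ∀ z : ℝ, HasDerivAt q
      (ustar - (1 + 2 * ustar / umax) * z + (2 / umax) * z ^ 2) z := by
    intro z
    have h := (((hasDerivAt_const z C).add ((hasDerivAt_id z).const_mul ustar)).sub
      ((hasDerivAt_pow 2 z).const_mul (1 / 2 + ustar / umax))).add
      ((hasDerivAt_pow 3 z).const_mul (2 / (3 * umax)))
    convert h using 1
    · rfl
    · rfl
    · rfl
    field_simp
    ring
  have hd1 : deriv q = fun z => ustar - (1 + 2 * ustar / umax) * z + (2 / umax) * z ^ 2 := by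
    funext z; exact (hq' z).deriv
  have hq'' : ∀ z : ℝ, HasDerivAt (deriv q)
      (-(1 + 2 * ustar / umax) + (4 / umax) * z) z := by
    intro z
    rw [hd1]
    have h := (((hasDerivAt_const z ustar).sub
      ((hasDerivAt_id z).const_mul (1 + 2 * ustar / umax))).add
      ((hasDerivAt_pow 2 z).const_mul (2 / umax)))
    convert h using 1
    · rfl
    · rfl
    · rfl
    ring
  apply convexOn_of_deriv2_nonneg (convex_Icc _ _)
  · exact Continuous.continuousOn (by fun_prop)
  · exact fun z _ => ((hq' z).differentiableAt).differentiableWithinAt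
  · exact fun z _ => ((hq'' z).differentiableAt).differentiableWithinAt
  · intro z hz
    rw [interior_Icc] at hz
    have hz' : (2 * ustar + umax) / 4 < z := hz.1
    have h2 : deriv (deriv q) z = -(1 + 2 * ustar / umax) + (4 / umax) * z :=
      (hq'' z).deriv
    rw [Function.iterate_succ, Function.iterate_one, Function.comp_apply, h2]
    have h3 : (2 * ustar + umax) / umax ≤ 4 * z / umax := by
      gcongr
      linarith
    have h4 : (2 * ustar + umax) / umax = 2 * (ustar / umax) + 1 := by
      field_simp
    have h5 : (4 / umax) * z = 4 * z / umax := by ring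
    have h6 : 2 * ustar / umax = 2 * (ustar / umax) := by ring
    linarith [h3, h4, h5, h6]
end

section
/- For every fixed s ∈ [0, u_max], the function z ↦ k(s, z) is convex on the interval ℐ_b = [u_max/4, u_max]. (This is the convexity of −dB/dt with respect to the right boundary value u(t,b).) -/
/-- Convexity of `-dB/dt` with respect to the right boundary value: for every
fixed `s ∈ [0, u_max]`, the function `z ↦ k(s, z)` is convex on
`ℐ_b = [u_max/4, u_max]`. -/
theorem k_convex_right_boundary
    (umax : ℝ) (f F : ℝ → ℝ) (k : ℝ → ℝ → ℝ)
    (humax : 0 < umax)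
    (hf : ∀ u : ℝ, f u = u * (1 - u / umax))
    (hF : ∀ u : ℝ, F u = u ^ 2 / 2 - u ^ 3 / (3 * umax))
    (hk : ∀ s z : ℝ, k s z = s * f s - z * f z - F s + F z) :
    ∀ s ∈ Set.Icc (0 : ℝ) umax,
      ConvexOn ℝ (Set.Icc (umax / 4) umax) (fun z => k s z) := by
  intro s _
  set c : ℝ := s * f s - F s with hc
  have hfun : (fun z => k s z)
      = fun z : ℝ => c + ((2 / (3 * umax)) * z ^ 3 - z ^ 2 / 2) := by
    funext z
    have h3 : (3 : ℝ) * umax ≠ 0 := by positivity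
    rw [hk, hf z, hF z, hc]
    field_simp
    ring
  rw [hfun]
  have hg : ∀ z : ℝ,
      deriv (fun z : ℝ => c + ((2 / (3 * umax)) * z ^ 3 - z ^ 2 / 2)) z
        = (2 / umax) * z ^ 2 - z := by
    intro z
    have h3 : (3 : ℝ) * umax ≠ 0 := by positivity
    have : HasDerivAt (fun z : ℝ => c + ((2 / (3 * umax)) * z ^ 3 - z ^ 2 / 2))
        ((2 / (3 * umax)) * (3 * z ^ 2) - (2 * z) / 2) z := by
      have h1 : HasDerivAt (fun z : ℝ => z ^ 3) (3 * z ^ 2) z := by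
        simpa using hasDerivAt_pow 3 z
      have h2 : HasDerivAt (fun z : ℝ => z ^ 2) (2 * z) z := by
        simpa using hasDerivAt_pow 2 z
      exact ((hasDerivAt_const z c).add ((h1.const_mul (2/(3*umax))).sub (h2.div_const 2))).congr_deriv (by ring)
    rw [this.deriv]
    field_simp
  apply convexOn_of_deriv2_nonneg (convex_Icc _ _)
  · exact (Continuous.continuousOn (by fun_prop))
  · intro x _
    exact DifferentiableAt.differentiableWithinAt (by fun_prop)
  · intro x _
    have : deriv (fun z : ℝ => c + ((2 / (3 * umax)) * z ^ 3 - z ^ 2 / 2))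
        = fun z => (2 / umax) * z ^ 2 - z := funext hg
    rw [this]
    exact DifferentiableAt.differentiableWithinAt (by fun_prop)
  · intro x hx
    rw [interior_Icc, Set.mem_Ioo] at hx
    have hderiv : deriv (fun z : ℝ => c + ((2 / (3 * umax)) * z ^ 3 - z ^ 2 / 2))
        = fun z => (2 / umax) * z ^ 2 - z := funext hg
    have h2 : deriv (deriv (fun z : ℝ => c + ((2 / (3 * umax)) * z ^ 3 - z ^ 2 / 2))) x
        = (2 / umax) * (2 * x) - 1 := by
      rw [hderiv]
      have : HasDerivAt (fun z : ℝ => (2 / umax) * z ^ 2 - z)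
          ((2 / umax) * (2 * x) - 1) x := by
        have h2' : HasDerivAt (fun z : ℝ => z ^ 2) (2 * x) x := by
          simpa using hasDerivAt_pow 2 x
        exact (h2'.const_mul (2 / umax)).sub (hasDerivAt_id x)
      exact this.deriv
    rw [show deriv^[2] (fun z : ℝ => c + ((2 / (3 * umax)) * z ^ 3 - z ^ 2 / 2))
        = deriv (deriv (fun z : ℝ => c + ((2 / (3 * umax)) * z ^ 3 - z ^ 2 / 2))) from rfl,
      h2]
    have hx1 : umax / 4 < x := hx.1
    have hxpos : 0 < x := lt_of_lt_of_le (by positivity) hx1.le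
    have h4 : umax ≤ 4 * x := by linarith
    rw [sub_nonneg, div_mul_eq_mul_div, le_div_iff₀ humax]
    nlinarith
end

section
/- Assume u* ≠ û and fix z ∈ [0, u_max]. Then the function p(s) := g(s, z) is strictly decreasing on [0, δ], strictly increasing on [δ, γ], and strictly decreasing on [γ, u_max], where δ = min(u*, û) and γ = max(u*, û). -/
/-- Case `u* ≠ û`: for fixed `z ∈ [0, u_max]`, the function `p(s) = g(s, z)`
is strictly decreasing on `[0, δ]`, strictly increasing on `[δ, γ]`, and
strictly decreasing on `[γ, u_max]`, where `δ = min(u*, û)`, `γ = max(u*, û)`. -/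
theorem p_monotonicity_ustar_ne_uhat
    (umax ustar uhat : ℝ) (f F : ℝ → ℝ) (g : ℝ → ℝ → ℝ)
    (humax : 0 < umax)
    (hustar : ustar ∈ Set.Icc (0 : ℝ) umax)
    (huhat : uhat = umax / 2)
    (hne : ustar ≠ uhat)
    (hf : ∀ u : ℝ, f u = u * (1 - u / umax))
    (hF : ∀ u : ℝ, F u = u ^ 2 / 2 - u ^ 3 / (3 * umax))
    (hg : ∀ s z : ℝ, g s z = (s - ustar) * f s - (z - ustar) * f z - F s + F z) :
    ∀ z ∈ Set.Icc (0 : ℝ) umax,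
      StrictAntiOn (fun s => g s z) (Set.Icc (0 : ℝ) (min ustar uhat)) ∧
      StrictMonoOn (fun s => g s z) (Set.Icc (min ustar uhat) (max ustar uhat)) ∧
      StrictAntiOn (fun s => g s z) (Set.Icc (max ustar uhat) umax) := by
  intro z _hz
  have hum : umax ≠ 0 := ne_of_gt humax
  set a : ℝ := -2 / (3 * umax) with ha
  set b : ℝ := 1 / 2 + ustar / umax with hb
  set c : ℝ := -ustar with hc
  set K : ℝ := -((z - ustar) * f z) + F z with hK
  have heq : (fun s => g s z) = fun s => a * s ^ 3 + b * s ^ 2 + c * s + K := by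
    funext s
    rw [hg, hf s, hF s, ha, hb, hc, hK]
    field_simp
    ring
  have hderiv : ∀ x : ℝ, deriv (fun s => g s z) x
      = ((x - ustar) * (umax - 2 * x)) / umax := by
    intro x
    have hd : HasDerivAt (fun s : ℝ => a * s ^ 3 + b * s ^ 2 + c * s + K)
        (a * (3 * x ^ 2) + b * (2 * x) + c) x := by
      have h1 := ((hasDerivAt_pow 3 x).const_mul a)
      have h2 := ((hasDerivAt_pow 2 x).const_mul b)
      have h3 := ((hasDerivAt_id x).const_mul c)
      have := ((h1.add h2).add h3).add_const K
      refine this.congr_deriv ?_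
      push_cast
      ring
    rw [heq, hd.deriv, ha, hb, hc]
    field_simp
    ring
  have hcont : Continuous (fun s => g s z) := by
    rw [heq]; fun_prop
  have hδγ : min ustar uhat ≤ max ustar uhat := min_le_max
  have hu0 : 0 ≤ ustar := hustar.1
  have hu1 : ustar ≤ umax := hustar.2
  have hh0 : 0 ≤ uhat := by rw [huhat]; positivity
  have hh1 : uhat ≤ umax := by rw [huhat]; linarith
  refine ⟨?_, ?_, ?_⟩
  · apply strictAntiOn_of_deriv_neg (convex_Icc _ _) hcont.continuousOn
    intro x hx
    rw [interior_Icc] at hx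
    rw [hderiv x]
    have h1 : x < ustar := lt_of_lt_of_le hx.2 (min_le_left _ _)
    have h2 : x < uhat := lt_of_lt_of_le hx.2 (min_le_right _ _)
    rw [huhat] at h2
    apply div_neg_of_neg_of_pos _ humax
    nlinarith
  · apply strictMonoOn_of_deriv_pos (convex_Icc _ _) hcont.continuousOn
    intro x hx
    rw [interior_Icc] at hx
    rw [hderiv x]
    apply div_pos _ humax
    rcases le_or_gt ustar uhat with h | h
    · rw [min_eq_left h, max_eq_right h] at hx
      rw [huhat] at hx
      nlinarith [hx.1, hx.2]
    · rw [min_eq_right h.le, max_eq_left h.le] at hx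
      rw [huhat] at hx
      nlinarith [hx.1, hx.2]
  · apply strictAntiOn_of_deriv_neg (convex_Icc _ _) hcont.continuousOn
    intro x hx
    rw [interior_Icc] at hx
    rw [hderiv x]
    have h1 : ustar < x := lt_of_le_of_lt (le_max_left _ _) hx.1
    have h2 : uhat < x := lt_of_le_of_lt (le_max_right _ _) hx.1
    rw [huhat] at h2
    apply div_neg_of_neg_of_pos _ humax
    nlinarith
end

section
/- Assume u* ≠ û and fix s ∈ [0, u_max]. Then the function q(z) := g(s, z) is strictly increasing on [0, δ], strictly decreasing on [δ, γ], and strictly increasing on [γ, u_max], where δ = min(u*, û) and γ = max(u*, û). -/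
/-- Case `u* ≠ û`: for fixed `s ∈ [0, u_max]`, the function `q(z) = g(s, z)`
is strictly increasing on `[0, δ]`, strictly decreasing on `[δ, γ]`, and
strictly increasing on `[γ, u_max]`, where `δ = min(u*, û)`, `γ = max(u*, û)`. -/
theorem q_monotonicity_ustar_ne_uhat
    (umax ustar uhat : ℝ) (f F : ℝ → ℝ) (g : ℝ → ℝ → ℝ)
    (humax : 0 < umax)
    (hustar : ustar ∈ Set.Icc (0 : ℝ) umax)
    (huhat : uhat = umax / 2)
    (hne : ustar ≠ uhat)
    (hf : ∀ u : ℝ, f u = u * (1 - u / umax))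
    (hF : ∀ u : ℝ, F u = u ^ 2 / 2 - u ^ 3 / (3 * umax))
    (hg : ∀ s z : ℝ, g s z = (s - ustar) * f s - (z - ustar) * f z - F s + F z) :
    ∀ s ∈ Set.Icc (0 : ℝ) umax,
      StrictMonoOn (fun z => g s z) (Set.Icc (0 : ℝ) (min ustar uhat)) ∧
      StrictAntiOn (fun z => g s z) (Set.Icc (min ustar uhat) (max ustar uhat)) ∧
      StrictMonoOn (fun z => g s z) (Set.Icc (max ustar uhat) umax) := by
  intro s hs
  have hume : umax ≠ 0 := ne_of_gt humax
  have key : ∀ z : ℝ, HasDerivAt (fun z => g s z)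
      (2 / umax * (z - ustar) * (z - uhat)) z := by
    intro z
    have hfun : (fun z => g s z) =
        fun z : ℝ => ((s - ustar) * f s - F s) +
          (-((z - ustar) * (z * (1 - z / umax))) + (z ^ 2 / 2 - z ^ 3 / (3 * umax))) := by
      funext z
      simp only [hg, hf, hF]
      ring
    rw [hfun]
    have hid := hasDerivAt_id z
    have h2 : HasDerivAt (fun z : ℝ => 1 - z / umax) (-(1 / umax)) z := by
      exact ((hasDerivAt_const z (1 : ℝ)).sub (hid.div_const umax)).congr_deriv (by simp)
    have h3 : HasDerivAt (fun z : ℝ => z * (1 - z / umax))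
        (1 * (1 - z / umax) + z * (-(1 / umax))) z := hid.mul h2
    have h4 := (hid.sub_const ustar).mul h3
    have h5 : HasDerivAt (fun z : ℝ => z ^ 2 / 2) ((2 : ℕ) * z ^ 1 / 2) z :=
      (hasDerivAt_pow 2 z).div_const 2
    have h6 : HasDerivAt (fun z : ℝ => z ^ 3 / (3 * umax)) ((3 : ℕ) * z ^ 2 / (3 * umax)) z :=
      (hasDerivAt_pow 3 z).div_const (3 * umax)
    have h7 := (h4.neg.add (h5.sub h6)).const_add ((s - ustar) * f s - F s)
    refine h7.congr_deriv ?_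
    push_cast [id]
    rw [huhat]
    field_simp
    ring
  have hderiv : ∀ z : ℝ, deriv (fun z => g s z) z = 2 / umax * (z - ustar) * (z - uhat) :=
    fun z => (key z).deriv
  have hdiff : Differentiable ℝ (fun z => g s z) := fun z => (key z).differentiableAt
  have hcont : Continuous (fun z => g s z) := hdiff.continuous
  have h2u : 0 < 2 / umax := by positivity
  have hu0 : 0 ≤ ustar := hustar.1
  have huu : ustar ≤ umax := hustar.2
  have hh0 : 0 < uhat := by rw [huhat]; linarith
  have hhu : uhat ≤ umax := by rw [huhat]; linarith
  refine ⟨?_, ?_, ?_⟩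
  · apply strictMonoOn_of_deriv_pos (convex_Icc _ _) hcont.continuousOn
    intro x hx
    rw [interior_Icc] at hx
    rw [hderiv]
    have h1 : 0 < ustar - x := by
      have := hx.2; have := min_le_left ustar uhat; linarith
    have h2 : 0 < uhat - x := by
      have := hx.2; have := min_le_right ustar uhat; linarith
    have : 2 / umax * (x - ustar) * (x - uhat) = 2 / umax * ((ustar - x) * (uhat - x)) := by ring
    rw [this]
    exact mul_pos h2u (mul_pos h1 h2)
  · apply strictAntiOn_of_deriv_neg (convex_Icc _ _) hcont.continuousOn
    intro x hx
    rw [interior_Icc] at hx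
    rw [hderiv]
    rcases lt_or_gt_of_ne hne with h | h
    · have hmin : min ustar uhat = ustar := min_eq_left h.le
      have hmax : max ustar uhat = uhat := max_eq_right h.le
      have h1 : 0 < x - ustar := by rw [hmin] at hx; linarith [hx.1]
      have h2 : 0 < uhat - x := by rw [hmax] at hx; linarith [hx.2]
      nlinarith [mul_pos h1 h2]
    · have hmin : min ustar uhat = uhat := min_eq_right h.le
      have hmax : max ustar uhat = ustar := max_eq_left h.le
      have h1 : 0 < x - uhat := by rw [hmin] at hx; linarith [hx.1]
      have h2 : 0 < ustar - x := by rw [hmax] at hx; linarith [hx.2]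
      nlinarith [mul_pos h1 h2]
  · apply strictMonoOn_of_deriv_pos (convex_Icc _ _) hcont.continuousOn
    intro x hx
    rw [interior_Icc] at hx
    rw [hderiv]
    have h1 : 0 < x - ustar := by
      have := hx.1; have := le_max_left ustar uhat; linarith
    have h2 : 0 < x - uhat := by
      have := hx.1; have := le_max_right ustar uhat; linarith
    exact mul_pos (mul_pos h2u h1) h2
end

section
/- Fix z ∈ [0, u_max] and C ≥ 0. The constraint set {s ∈ 𝒞_a : g(s, z) ≤ −C} of the left-boundary stabilization problem is nonempty if and only if g(δ, z) ≤ −C, where δ = min(u*, û); equivalently, the minimum of s ↦ g(s, z) over 𝒞_a is attained at s = δ. -/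
/-!
`g s z = P s - P z` with `P s = (s - u*) f s - F s`, and `P' s = (s - u*) f' s` vanishes exactly
at `u*` and `û`. Hence `P` has a local minimum at `δ = min u* û` and decreases again beyond
`max u* û`; the right end `(2u* + u_max)/4` of `𝒞_a` is chosen so that this second descent stays
above `P δ`, which the factorizations `P s - P δ = (s - δ)² · (affine in s) / (6 u_max)` show.
-/

open Set

theorem IsMinOn.sep_le_nonempty_iff {α β : Type*} [Preorder β] {φ : α → β} {S : Set α}
    {a : α} (hmin : IsMinOn φ S a) (ha : a ∈ S) (c : β) :
    {x ∈ S | φ x ≤ c}.Nonempty ↔ φ a ≤ c :=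
  ⟨fun ⟨_, hxS, hxc⟩ => (hmin hxS).trans hxc, fun h => ⟨a, ha, h⟩⟩

namespace LeftStabilization

noncomputable def potential (umax ustar s : ℝ) : ℝ :=
  (s - ustar) * (s * (1 - s / umax)) - (s ^ 2 / 2 - s ^ 3 / (3 * umax))

variable {umax ustar : ℝ}

theorem potential_sub_at_ustar (humax : umax ≠ 0) (s : ℝ) :
    potential umax ustar s - potential umax ustar ustar
      = (s - ustar) ^ 2 * (3 * umax - 2 * ustar - 4 * s) / (6 * umax) := by
  unfold potential
  field_simp
  ring

theorem potential_sub_at_half (humax : umax ≠ 0) (s : ℝ) :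
    potential umax ustar s - potential umax ustar (umax / 2)
      = (s - umax / 2) ^ 2 * (6 * ustar - umax - 4 * s) / (6 * umax) := by
  unfold potential
  field_simp
  ring

theorem min_half_mem_Icc (humax : 0 < umax) (hustar : 0 ≤ ustar) :
    min ustar (umax / 2) ∈ Icc 0 ((2 * ustar + umax) / 4) := by
  constructor
  · positivity
  · rcases le_total ustar (umax / 2) with h | h
    · rw [min_eq_left h]; linarith
    · rw [min_eq_right h]; linarith

theorem isMinOn_potential (humax : 0 < umax) :
    IsMinOn (potential umax ustar) (Icc 0 ((2 * ustar + umax) / 4)) (min ustar (umax / 2)) := by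
  refine isMinOn_iff.mpr fun s ⟨_, hs⟩ => sub_nonneg.mp ?_
  rcases le_total ustar (umax / 2) with h | h
  · rw [min_eq_left h, potential_sub_at_ustar humax.ne']
    exact div_nonneg (mul_nonneg (sq_nonneg _) (by linarith)) (by linarith)
  · rw [min_eq_right h, potential_sub_at_half humax.ne']
    exact div_nonneg (mul_nonneg (sq_nonneg _) (by linarith)) (by linarith)

end LeftStabilization

open LeftStabilization in
/-- Feasibility of the left-boundary stabilization problem: for fixed
`z ∈ [0, u_max]` and `C ≥ 0`, the constraint set `{s ∈ 𝒞_a : g(s, z) ≤ -C}`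
is nonempty if and only if `g(δ, z) ≤ -C`, where `δ = min(u*, û)`;
equivalently, the minimum of `s ↦ g(s, z)` over `𝒞_a = [0, (2u* + u_max)/4]`
is attained at `s = δ`. -/
theorem left_stabilization_feasibility
    (umax ustar uhat : ℝ) (f F : ℝ → ℝ) (g : ℝ → ℝ → ℝ)
    (humax : 0 < umax)
    (hustar : ustar ∈ Set.Icc (0 : ℝ) umax)
    (huhat : uhat = umax / 2)
    (hf : ∀ u : ℝ, f u = u * (1 - u / umax))
    (hF : ∀ u : ℝ, F u = u ^ 2 / 2 - u ^ 3 / (3 * umax))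
    (hg : ∀ s z : ℝ, g s z = (s - ustar) * f s - (z - ustar) * f z - F s + F z) :
    ∀ z ∈ Set.Icc (0 : ℝ) umax, ∀ C : ℝ, 0 ≤ C →
      (min ustar uhat ∈ Set.Icc (0 : ℝ) ((2 * ustar + umax) / 4) ∧
        ∀ s ∈ Set.Icc (0 : ℝ) ((2 * ustar + umax) / 4),
          g (min ustar uhat) z ≤ g s z) ∧
      ({s ∈ Set.Icc (0 : ℝ) ((2 * ustar + umax) / 4) | g s z ≤ -C}.Nonempty ↔
        g (min ustar uhat) z ≤ -C) := by
  intro z _ C _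
  subst huhat
  have hg_eq : (g · z) = fun s => potential umax ustar s - potential umax ustar z := by
    funext s
    simp only [hg, hf, hF, potential]
    ring
  have hmin : IsMinOn (g · z) (Icc 0 ((2 * ustar + umax) / 4)) (min ustar (umax / 2)) := by
    rw [hg_eq]
    exact (isMinOn_potential humax).sub isMaxOn_const
  have hmem := min_half_mem_Icc humax hustar.1
  exact ⟨⟨hmem, isMinOn_iff.mp hmin⟩, hmin.sep_le_nonempty_iff hmem (-C)⟩
end

section
/- Fix z ∈ [0, u_max] and C ≥ 0, and suppose g(δ, z) ≤ −C < g(0, z), where δ = min(u*, û). Then there exists a unique s* ∈ (0, δ] with g(s*, z) = −C, and every s ∈ 𝒞_a with g(s, z) ≤ −C satisfies s ≥ s*; consequently s* minimizes s ↦ s² over the constraint set {s ∈ 𝒞_a : g(s, z) ≤ −C}. -/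
/-!
Since `F' = f`, the `f(s)` terms cancel in the derivative of `s ↦ g(s, z)`, which is
`(s - u*) f'(s) = (s - u*)(1 - 2s/u_max)`. For `s < δ` we have `s < u*` and `s < û`, so this is
negative and `g(·, z)` is strictly decreasing on `[0, δ]`. The intermediate value theorem gives a
root `s* ∈ (0, δ]` of `g(·, z) = -C`, strict monotonicity makes it unique, and an admissible
`s < s*` would lie in `[0, δ]` with `g(s, z) > g(s*, z) = -C`.
-/

open Set

theorem StrictAntiOn.le_of_apply_le {α β : Type*} [LinearOrder α] [Preorder β] {φ : α → β}
    {a b x s : α} (hφ : StrictAntiOn φ (Icc a b)) (hx : x ∈ Icc a b) (has : a ≤ s)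
    (hs : φ s ≤ φ x) : x ≤ s := by
  by_contra! hsx
  exact (hφ ⟨has, hsx.le.trans hx.2⟩ hx hsx).not_ge hs

theorem HasDerivAt.sub_mul_sub_primitive {f F : ℝ → ℝ} {f' a s : ℝ} (hf : HasDerivAt f f' s)
    (hF : HasDerivAt F (f s) s) :
    HasDerivAt (fun t => (t - a) * f t - F t) ((s - a) * f') s :=
  ((((hasDerivAt_id' s).sub_const a).mul hf).sub hF).congr_deriv (by ring)

theorem hasDerivAt_logistic (umax u : ℝ) :
    HasDerivAt (fun u => u * (1 - u / umax)) (1 - 2 * u / umax) u :=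
  ((hasDerivAt_id' u).mul (((hasDerivAt_id' u).div_const umax).const_sub 1)).congr_deriv (by ring)

theorem hasDerivAt_logistic_primitive (umax u : ℝ) :
    HasDerivAt (fun u => u ^ 2 / 2 - u ^ 3 / (3 * umax)) (u * (1 - u / umax)) u := by
  refine (((hasDerivAt_pow 2 u).div_const 2).sub
    ((hasDerivAt_pow 3 u).div_const (3 * umax))).congr_deriv ?_
  norm_num only [Nat.cast_ofNat, Nat.add_one_sub_one,
    mul_div_mul_left _ umax (three_ne_zero' ℝ)]
  ring

theorem strictAntiOn_sub_mul_logistic_sub_primitive {umax : ℝ} (humax : 0 < umax) (a c : ℝ) :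
    StrictAntiOn (fun t => (t - a) * (t * (1 - t / umax)) - (t ^ 2 / 2 - t ^ 3 / (3 * umax)) + c)
      (Iic (min a (umax / 2))) := by
  have hderiv (s : ℝ) := ((hasDerivAt_logistic umax s).sub_mul_sub_primitive (a := a)
    (hasDerivAt_logistic_primitive umax s)).add_const c
  refine strictAntiOn_of_hasDerivWithinAt_neg (convex_Iic _)
    (fun t _ => (hderiv t).continuousAt.continuousWithinAt)
    (fun t _ => (hderiv t).hasDerivWithinAt) ?_
  rw [interior_Iic]
  intro t (ht : t < _)
  have hfactor : 0 < 1 - 2 * t / umax := by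
    rw [sub_pos, div_lt_one humax]
    linarith [ht.trans_le (min_le_right _ _)]
  exact mul_neg_of_neg_of_pos (by linarith [ht.trans_le (min_le_left _ _)]) hfactor

/-- Optimal left-boundary stabilizing control in the intermediate case: for
fixed `z ∈ [0, u_max]` and `C ≥ 0` with `g(δ, z) ≤ -C < g(0, z)`
(`δ = min(u*, û)`), there is a unique `s* ∈ (0, δ]` with `g(s*, z) = -C`;
every `s ∈ 𝒞_a` satisfying the constraint `g(s, z) ≤ -C` satisfies `s ≥ s*`,
and `s*` minimizes `s ↦ s²` over the constraint set. -/
theorem left_stabilization_optimal_root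
    (umax ustar uhat : ℝ) (f F : ℝ → ℝ) (g : ℝ → ℝ → ℝ)
    (humax : 0 < umax)
    (hustar : ustar ∈ Set.Icc (0 : ℝ) umax)
    (huhat : uhat = umax / 2)
    (hf : ∀ u : ℝ, f u = u * (1 - u / umax))
    (hF : ∀ u : ℝ, F u = u ^ 2 / 2 - u ^ 3 / (3 * umax))
    (hg : ∀ s z : ℝ, g s z = (s - ustar) * f s - (z - ustar) * f z - F s + F z) :
    ∀ z ∈ Set.Icc (0 : ℝ) umax, ∀ C : ℝ, 0 ≤ C →
      g (min ustar uhat) z ≤ -C → -C < g 0 z →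
      ∃ sstar ∈ Set.Ioc (0 : ℝ) (min ustar uhat),
        g sstar z = -C ∧
        (∀ s ∈ Set.Ioc (0 : ℝ) (min ustar uhat), g s z = -C → s = sstar) ∧
        (∀ s ∈ Set.Icc (0 : ℝ) ((2 * ustar + umax) / 4), g s z ≤ -C → sstar ≤ s) ∧
        sstar ∈ Set.Icc (0 : ℝ) ((2 * ustar + umax) / 4) ∧
        (∀ s ∈ Set.Icc (0 : ℝ) ((2 * ustar + umax) / 4), g s z ≤ -C →
          sstar ^ 2 ≤ s ^ 2) := by
  intro z _ C _ hδC h0C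
  subst huhat
  set δ := min ustar (umax / 2)
  have hgz : (fun t => g t z) = fun t => (t - ustar) * (t * (1 - t / umax))
      - (t ^ 2 / 2 - t ^ 3 / (3 * umax)) + (F z - (z - ustar) * f z) :=
    funext fun t => by rw [hg, hf, hF]; ring
  have hanti : StrictAntiOn (fun t => g t z) (Icc 0 δ) := by
    rw [hgz]
    exact (strictAntiOn_sub_mul_logistic_sub_primitive humax _ _).mono Icc_subset_Iic_self
  have hcont : ContinuousOn (fun t => g t z) (Icc 0 δ) := by
    rw [hgz]
    fun_prop
  obtain ⟨sstar, hsIoc, hsval⟩ :=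
    intermediate_value_Ioc' (le_min hustar.1 (by linarith)) hcont ⟨hδC, h0C⟩
  have hδ_le : δ ≤ (2 * ustar + umax) / 4 := by
    linarith [min_le_left ustar (umax / 2), min_le_right ustar (umax / 2)]
  have hmin : ∀ s ∈ Icc (0 : ℝ) ((2 * ustar + umax) / 4), g s z ≤ -C → sstar ≤ s :=
    fun s hs hgs => hanti.le_of_apply_le (Ioc_subset_Icc_self hsIoc) hs.1 (hgs.trans_eq hsval.symm)
  refine ⟨sstar, hsIoc, hsval, fun s hs hgs => ?_, hmin, ⟨hsIoc.1.le, hsIoc.2.trans hδ_le⟩,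
    fun s hs hgs => pow_le_pow_left₀ hsIoc.1.le (hmin s hs hgs) 2⟩
  exact hanti.injOn (Ioc_subset_Icc_self hs) (Ioc_subset_Icc_self hsIoc) (hgs.trans hsval.symm)
end

section
/- Assume u* ≠ û, fix s ∈ [0, u_max] and C ≥ 0, and suppose g(s, γ) ≤ −C < g(s, (2u* + u_max)/4), where γ = max(u*, û). Then there exists a unique z* ∈ ((2u* + u_max)/4, γ] with g(s, z*) = −C, and every z ∈ 𝒞_b with g(s, z) ≤ −C satisfies z ≥ z*; consequently z* minimizes z ↦ z² over the constraint set {z ∈ 𝒞_b : g(s, z) ≤ −C}. -/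
/-- Optimal right-boundary stabilizing control in the intermediate case
(`u* ≠ û`): for fixed `s ∈ [0, u_max]` and `C ≥ 0` with
`g(s, γ) ≤ -C < g(s, (2u* + u_max)/4)` (`γ = max(u*, û)`), there is a unique
`z* ∈ ((2u* + u_max)/4, γ]` with `g(s, z*) = -C`; every `z ∈ 𝒞_b` satisfying
the constraint `g(s, z) ≤ -C` satisfies `z ≥ z*`, and `z*` minimizes
`z ↦ z²` over the constraint set. -/
theorem right_stabilization_optimal_root
    (umax ustar uhat : ℝ) (f F : ℝ → ℝ) (g : ℝ → ℝ → ℝ)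
    (humax : 0 < umax)
    (hustar : ustar ∈ Set.Icc (0 : ℝ) umax)
    (huhat : uhat = umax / 2)
    (hne : ustar ≠ uhat)
    (hf : ∀ u : ℝ, f u = u * (1 - u / umax))
    (hF : ∀ u : ℝ, F u = u ^ 2 / 2 - u ^ 3 / (3 * umax))
    (hg : ∀ s z : ℝ, g s z = (s - ustar) * f s - (z - ustar) * f z - F s + F z) :
    ∀ s ∈ Set.Icc (0 : ℝ) umax, ∀ C : ℝ, 0 ≤ C →
      g s (max ustar uhat) ≤ -C → -C < g s ((2 * ustar + umax) / 4) →
      ∃ zstar ∈ Set.Ioc ((2 * ustar + umax) / 4) (max ustar uhat),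
        g s zstar = -C ∧
        (∀ z ∈ Set.Ioc ((2 * ustar + umax) / 4) (max ustar uhat),
          g s z = -C → z = zstar) ∧
        (∀ z ∈ Set.Icc ((2 * ustar + umax) / 4) umax, g s z ≤ -C → zstar ≤ z) ∧
        zstar ∈ Set.Icc ((2 * ustar + umax) / 4) umax ∧
        (∀ z ∈ Set.Icc ((2 * ustar + umax) / 4) umax, g s z ≤ -C →
          zstar ^ 2 ≤ z ^ 2) := by
  intro s hs C hC hγ hm
  set m : ℝ := (2 * ustar + umax) / 4 with hmdef
  set γ : ℝ := max ustar uhat with hγdef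
  have hu0 : 0 ≤ ustar := hustar.1
  have hu1 : ustar ≤ umax := hustar.2
  have hm0 : 0 ≤ m := by positivity
  have hγle : γ ≤ umax := by
    apply max_le hu1
    rw [huhat]; linarith
  have hmγ : m < γ := by
    rcases lt_or_gt_of_ne hne with h | h
    · have : γ = uhat := max_eq_right h.le
      rw [this, hmdef, huhat]; rw [huhat] at h; linarith
    · have : γ = ustar := max_eq_left h.le
      rw [this, hmdef]; rw [huhat] at h; linarith
  -- derivative of z ↦ g s z
  have key : ∀ z : ℝ, HasDerivAt (fun z => g s z)
      (-(z - ustar) * (1 - 2 * z / umax)) z := by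
    intro z
    have hfun : (fun z => g s z) = fun z =>
        ((s - ustar) * f s - F s) +
          (-((z - ustar) * (z * (1 - z / umax))) + (z ^ 2 / 2 - z ^ 3 / (3 * umax))) := by
      funext z; simp only [hg, hf, hF]; ring
    rw [hfun]
    have h1 : HasDerivAt (fun z : ℝ => z - ustar) 1 z := (hasDerivAt_id z).sub_const ustar
    have h2 : HasDerivAt (fun z : ℝ => z * (1 - z / umax)) (1 - 2 * z / umax) z := by
      have := (hasDerivAt_id z).mul
        ((hasDerivAt_const z (1 : ℝ)).sub ((hasDerivAt_id z).div_const umax))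
      refine this.congr_deriv ?_; simp; ring
    have h3 : HasDerivAt (fun z : ℝ => z ^ 2 / 2 - z ^ 3 / (3 * umax))
        (z - z ^ 2 / umax) z := by
      have := ((hasDerivAt_pow 2 z).div_const 2).sub ((hasDerivAt_pow 3 z).div_const (3 * umax))
      refine this.congr_deriv ?_
      simp; ring
    have := (hasDerivAt_const z ((s - ustar) * f s - F s)).add (((h1.mul h2).neg).add h3)
    refine this.congr_deriv ?_
    ring
  have hcont : Continuous (fun z => g s z) := by
    rw [continuous_iff_continuousAt]; exact fun z => (key z).continuousAt
  -- strict antitonicity on [m, γ]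
  have hanti : StrictAntiOn (fun z => g s z) (Set.Icc m γ) := by
    apply strictAntiOn_of_deriv_neg (convex_Icc m γ) hcont.continuousOn
    intro z hz
    rw [interior_Icc] at hz
    rw [(key z).deriv]
    rcases lt_or_gt_of_ne hne with h | h
    · -- ustar < uhat, γ = uhat = umax/2
      have hγu : γ = uhat := max_eq_right h.le
      have hz2 : z < umax / 2 := by rw [← huhat, ← hγu]; exact hz.2
      have hz1 : ustar < z := by
        have : ustar < m := by rw [hmdef]; rw [huhat] at h; linarith
        linarith [hz.1]
      have hp : 0 < 1 - 2 * z / umax := by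
        rw [sub_pos, div_lt_one humax]; linarith
      nlinarith
    · -- uhat < ustar, γ = ustar
      have hγu : γ = ustar := max_eq_left h.le
      have hz2 : z < ustar := by rw [← hγu]; exact hz.2
      have hz1 : umax / 2 < z := by
        have : umax / 2 < m := by rw [hmdef]; rw [huhat] at h; linarith
        linarith [hz.1]
      have hp : 1 - 2 * z / umax < 0 := by
        rw [sub_neg, lt_div_iff₀ humax]; linarith
      nlinarith
  -- existence via IVT
  have hIVT := intermediate_value_Icc' hmγ.le hcont.continuousOn
  have hmem : -C ∈ Set.Icc (g s γ) (g s m) := ⟨hγ, hm.le⟩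
  obtain ⟨zstar, hzIcc, hzval⟩ := hIVT hmem
  have hzne : zstar ≠ m := by
    intro h; rw [h] at hzval; exact absurd hzval.symm (ne_of_lt hm)
  have hzIoc : zstar ∈ Set.Ioc m γ := ⟨lt_of_le_of_ne hzIcc.1 (Ne.symm hzne), hzIcc.2⟩
  refine ⟨zstar, hzIoc, hzval, ?_, ?_, ?_, ?_⟩
  · -- uniqueness
    intro z hz hzv
    exact hanti.injOn ⟨hz.1.le, hz.2⟩ ⟨hzIcc.1, hzIcc.2⟩ (hzv.trans hzval.symm)
  · -- lower bound
    intro z hz hzle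
    by_contra hlt
    push_neg at hlt
    have hzγ : z ≤ γ := hlt.le.trans hzIcc.2
    have := hanti ⟨hz.1, hzγ⟩ ⟨hzIcc.1, hzIcc.2⟩ hlt
    rw [hzval] at this
    exact absurd (lt_of_le_of_lt hzle this) (lt_irrefl _)
  · exact ⟨hzIcc.1, hzIcc.2.trans hγle⟩
  · -- square minimality
    intro z hz hzle
    have hzs : zstar ≤ z := by
      by_contra hlt
      push_neg at hlt
      have hzγ : z ≤ γ := hlt.le.trans hzIcc.2
      have := hanti ⟨hz.1, hzγ⟩ ⟨hzIcc.1, hzIcc.2⟩ hlt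
      rw [hzval] at this
      exact absurd (lt_of_le_of_lt hzle this) (lt_irrefl _)
    have h0 : 0 ≤ zstar := hm0.trans hzIcc.1
    exact pow_le_pow_left₀ h0 hzs 2
end

section
/- Fix s ∈ [0, u_max] and D ≥ 0, and consider the constraint set S = {z ∈ ℐ_b : k(s, z) ≤ D} of the right-boundary invariance problem. Then: (a) S is nonempty if and only if k(s, û) ≤ D; (b) if k(s, u_max/4) ≤ D, then z = u_max/4 belongs to S and minimizes z ↦ z² over S; (c) if k(s, û) ≤ D < k(s, u_max/4), then there exists a unique z* ∈ (u_max/4, û] with k(s, z*) = D, every z ∈ S satisfies z ≥ z*, and z* minimizes z ↦ z² over S. -/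
/-!
Since `z f(z) - F(z) = φ(z) := z²/2 - 2z³/(3 u_max)`, the constraint reads
`k(s, z) = φ(s) - φ(z) ≤ D`. The cubic `φ` is strictly increasing on `[0, û]` and attains its
maximum over `[0, ∞)` at `û = u_max/2`, as `φ(û) - φ(z) = (z - û)²(4z + u_max)/(6 u_max)`. So the
constraint set is nonempty iff `û` is feasible, and when `u_max/4` is infeasible the
intermediate value theorem on `[u_max/4, û]` produces the smallest feasible point `z*`.
-/

open Set

noncomputable def phi (umax z : ℝ) : ℝ := z ^ 2 / 2 - 2 * z ^ 3 / (3 * umax)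

section Phi

variable {umax : ℝ}

lemma continuous_phi : Continuous (phi umax) := by
  unfold phi
  fun_prop

lemma phi_half_sub_phi (humax : umax ≠ 0) (z : ℝ) :
    phi umax (umax / 2) - phi umax z = (z - umax / 2) ^ 2 * (4 * z + umax) / (6 * umax) := by
  unfold phi
  field_simp
  ring

lemma phi_sub_phi (humax : umax ≠ 0) (a b : ℝ) :
    phi umax b - phi umax a =
      (b - a) * (3 * umax * (a + b) - 4 * (a ^ 2 + a * b + b ^ 2)) / (6 * umax) := by
  unfold phi
  field_simp
  ring

variable (humax : 0 < umax)
include humax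

lemma phi_le_phi_half {z : ℝ} (hz : 0 ≤ z) : phi umax z ≤ phi umax (umax / 2) := by
  rw [← sub_nonneg, phi_half_sub_phi humax.ne']
  have : 0 < 4 * z + umax := by linarith
  positivity

lemma phi_strictMonoOn : StrictMonoOn (phi umax) (Icc 0 (umax / 2)) := by
  rintro a ⟨ha, -⟩ b ⟨-, hb⟩ hab
  rw [← sub_pos, phi_sub_phi humax.ne']
  -- `4(a² + ab + b²) ≤ 2 u_max (2a + b) < 3 u_max (a + b)` since `a, b ≤ u_max/2` and `a < b`
  have : 0 < 3 * umax * (a + b) - 4 * (a ^ 2 + a * b + b ^ 2) := by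
    nlinarith [mul_le_mul_of_nonneg_left hb ha, mul_le_mul_of_nonneg_left (hab.le.trans hb) ha,
      mul_le_mul_of_nonneg_left hb (ha.trans hab.le)]
  have : 0 < b - a := sub_pos.2 hab
  positivity

lemma le_of_phi_le_phi {y z : ℝ} (hy : y ∈ Icc 0 (umax / 2)) (hz : 0 ≤ z)
    (h : phi umax y ≤ phi umax z) : y ≤ z := by
  by_contra! hzy
  exact (phi_strictMonoOn humax ⟨hz, hzy.le.trans hy.2⟩ hy hzy).not_ge h

lemma exists_least_phi_ge {c : ℝ} (hc₁ : phi umax (umax / 4) < c) (hc₂ : c ≤ phi umax (umax / 2)) :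
    ∃ zstar ∈ Ioc (umax / 4) (umax / 2),
      phi umax zstar = c ∧
      (∀ z ∈ Ioc (umax / 4) (umax / 2), phi umax z = c → z = zstar) ∧
      ∀ z ∈ {z ∈ Icc (umax / 4) umax | c ≤ phi umax z}, zstar ≤ z := by
  obtain ⟨zstar, ⟨hz₁, hz₂⟩, hzc⟩ := intermediate_value_Icc (by linarith : umax / 4 ≤ umax / 2)
    continuous_phi.continuousOn ⟨hc₁.le, hc₂⟩
  have hz₁' : umax / 4 < zstar := lt_of_le_of_ne hz₁ (by rintro rfl; exact hc₁.ne hzc)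
  have hzstar : zstar ∈ Icc 0 (umax / 2) := ⟨by linarith, hz₂⟩
  refine ⟨zstar, ⟨hz₁', hz₂⟩, hzc, fun z ⟨hza, hzb⟩ hz => ?_, fun z ⟨⟨hz, _⟩, hcz⟩ => ?_⟩
  · exact le_antisymm (le_of_phi_le_phi humax ⟨by linarith, hzb⟩ (by linarith) (by rw [hz, hzc]))
      (le_of_phi_le_phi humax hzstar (by linarith) (by rw [hz, hzc]))
  · exact le_of_phi_le_phi humax hzstar (by linarith) (hzc ▸ hcz)

end Phi

/-- Feasibility and optimal solution of the right-boundary invariance problem: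
for fixed `s ∈ [0, u_max]` and `D ≥ 0`, with constraint set
`S = {z ∈ ℐ_b : k(s, z) ≤ D}`, `ℐ_b = [u_max/4, u_max]`:
(a) `S` is nonempty iff `k(s, û) ≤ D`;
(b) if `k(s, u_max/4) ≤ D` then `z = u_max/4 ∈ S` and it minimizes `z ↦ z²`
over `S`;
(c) if `k(s, û) ≤ D < k(s, u_max/4)` then there is a unique
`z* ∈ (u_max/4, û]` with `k(s, z*) = D`, every `z ∈ S` satisfies `z ≥ z*`,
and `z*` minimizes `z ↦ z²` over `S`. -/
theorem right_invariance_feasibility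
    (umax uhat : ℝ) (f F : ℝ → ℝ) (k : ℝ → ℝ → ℝ)
    (humax : 0 < umax)
    (huhat : uhat = umax / 2)
    (hf : ∀ u : ℝ, f u = u * (1 - u / umax))
    (hF : ∀ u : ℝ, F u = u ^ 2 / 2 - u ^ 3 / (3 * umax))
    (hk : ∀ s z : ℝ, k s z = s * f s - z * f z - F s + F z) :
    ∀ s ∈ Set.Icc (0 : ℝ) umax, ∀ D : ℝ, 0 ≤ D →
      ({z ∈ Set.Icc (umax / 4) umax | k s z ≤ D}.Nonempty ↔ k s uhat ≤ D) ∧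
      (k s (umax / 4) ≤ D →
        umax / 4 ∈ {z ∈ Set.Icc (umax / 4) umax | k s z ≤ D} ∧
        ∀ z ∈ {z ∈ Set.Icc (umax / 4) umax | k s z ≤ D},
          (umax / 4) ^ 2 ≤ z ^ 2) ∧
      (k s uhat ≤ D → D < k s (umax / 4) →
        ∃ zstar ∈ Set.Ioc (umax / 4) uhat,
          k s zstar = D ∧
          (∀ z ∈ Set.Ioc (umax / 4) uhat, k s z = D → z = zstar) ∧
          (∀ z ∈ {z ∈ Set.Icc (umax / 4) umax | k s z ≤ D}, zstar ≤ z) ∧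
          zstar ∈ {z ∈ Set.Icc (umax / 4) umax | k s z ≤ D} ∧
          (∀ z ∈ {z ∈ Set.Icc (umax / 4) umax | k s z ≤ D},
            zstar ^ 2 ≤ z ^ 2)) := by
  intro s _ D _
  subst huhat
  have hkphi : ∀ z, k s z = phi umax s - phi umax z := fun z => by
    rw [hk, hf, hf, hF, hF, phi, phi]
    field_simp
    ring
  refine ⟨⟨fun ⟨z, hz⟩ => ?_, fun h => ⟨umax / 2, ⟨by linarith, by linarith⟩, h⟩⟩, ?_, ?_⟩
  · rw [hkphi]
    linarith [hkphi z ▸ hz.2, phi_le_phi_half humax (by linarith [hz.1.1] : 0 ≤ z)]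
  · exact fun h => ⟨⟨⟨le_rfl, by linarith⟩, h⟩, fun z hz => pow_le_pow_left₀ (by linarith) hz.1.1 2⟩
  · intro h₁ h₂
    simp only [hkphi] at h₁ h₂ ⊢
    obtain ⟨zstar, hzI, hzc, huniq, hleast⟩ :=
      exists_least_phi_ge (c := phi umax s - D) humax (by linarith) (by linarith)
    have hleast' : ∀ z ∈ {z ∈ Icc (umax / 4) umax | phi umax s - phi umax z ≤ D}, zstar ≤ z :=
      fun z ⟨hz, hzD⟩ => hleast z ⟨hz, by linarith⟩
    refine ⟨zstar, hzI, by linarith, fun z hz hzD => huniq z hz (by linarith), hleast',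
      ⟨⟨hzI.1.le, by linarith [hzI.2]⟩, by linarith⟩,
      fun z hz => pow_le_pow_left₀ (by linarith [hzI.1]) (hleast' z hz) 2⟩
end

section
/- Assume u* ≤ u_max/4 and let C ≥ 0, D ≥ 0. Then for every s ∈ [0, u_max] and every z ∈ ℐ_b one has g(s, z) ≥ g(s, û) and k(s, z) ≥ k(s, û); consequently the constraint set of the compound (stability-and-invariance) left-boundary problem, {s ∈ 𝒞_a : (∃ z₁ ∈ ℐ_b, g(s, z₁) ≤ −C) and (∃ z₂ ∈ ℐ_b, k(s, z₂) ≤ D)}, equals {s ∈ 𝒞_a : g(s, û) ≤ −C and k(s, û) ≤ D}. -/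
/-!
The constraint functions depend on `z` only through `-φ_c(z)` with `φ_c(z) = (z - c) f(z) - F(z)`,
where `c = u*` for `g` and `c = 0` for `k`. Since `φ_c' (z) = (z - c) f'(z)`, the point `û` (where
`f' = 0`) is critical, and explicitly `φ_c(û) - φ_c(z) = (2z - u_max)² (4z + u_max - 6c) / (24 u_max)`,
which is nonnegative on `ℐ_b` as soon as `c ≤ u_max/4`. So `z = û` minimises both constraints over
`ℐ_b`, and an existential constraint over `ℐ_b` holds iff it holds at `û`.
-/

open Set

theorem IsMinOn.exists_mem_le_iff {α β : Type*} [Preorder β] {h : α → β} {I : Set α} {a : α}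
    (hmin : IsMinOn h I a) (ha : a ∈ I) {c : β} : (∃ z ∈ I, h z ≤ c) ↔ h a ≤ c :=
  ⟨fun ⟨_, hz, hzc⟩ => (isMinOn_iff.mp hmin _ hz).trans hzc, fun hac => ⟨a, ha, hac⟩⟩

section LogisticFlux

variable {umax : ℝ} {f F : ℝ → ℝ}

theorem flux_potential_half_sub_eq (hu : umax ≠ 0) (hf : ∀ u, f u = u * (1 - u / umax))
    (hF : ∀ u, F u = u ^ 2 / 2 - u ^ 3 / (3 * umax)) (c z : ℝ) :
    ((umax / 2 - c) * f (umax / 2) - F (umax / 2)) - ((z - c) * f z - F z) =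
      (2 * z - umax) ^ 2 * (4 * z + umax - 6 * c) / (24 * umax) := by
  simp only [hf, hF]
  field_simp
  ring

theorem flux_potential_le_half (hu : 0 < umax) (hf : ∀ u, f u = u * (1 - u / umax))
    (hF : ∀ u, F u = u ^ 2 / 2 - u ^ 3 / (3 * umax)) {c z : ℝ} (hc : c ≤ umax / 4)
    (hz : umax / 4 ≤ z) :
    (z - c) * f z - F z ≤ (umax / 2 - c) * f (umax / 2) - F (umax / 2) := by
  have hgap := flux_potential_half_sub_eq hu.ne' hf hF c z
  have : 0 ≤ (2 * z - umax) ^ 2 * (4 * z + umax - 6 * c) / (24 * umax) := by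
    apply div_nonneg (mul_nonneg (sq_nonneg _) _) <;> linarith
  linarith

end LogisticFlux

theorem compound_left_boundary_constraint_set_general
    (umax ustar uhat : ℝ) (f F : ℝ → ℝ) (g k : ℝ → ℝ → ℝ)
    (humax : 0 < umax)
    (hustar_le : ustar ≤ umax / 4)
    (huhat : uhat = umax / 2)
    (hf : ∀ u : ℝ, f u = u * (1 - u / umax))
    (hF : ∀ u : ℝ, F u = u ^ 2 / 2 - u ^ 3 / (3 * umax))
    (hg : ∀ s z : ℝ, g s z = (s - ustar) * f s - (z - ustar) * f z - F s + F z)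
    (hk : ∀ s z : ℝ, k s z = s * f s - z * f z - F s + F z)
    (C D : ℝ) :
    (∀ s ∈ Set.Icc (0 : ℝ) umax, ∀ z ∈ Set.Icc (umax / 4) umax,
      g s uhat ≤ g s z ∧ k s uhat ≤ k s z) ∧
    {s ∈ Set.Icc (0 : ℝ) ((2 * ustar + umax) / 4) |
        (∃ z₁ ∈ Set.Icc (umax / 4) umax, g s z₁ ≤ -C) ∧
        (∃ z₂ ∈ Set.Icc (umax / 4) umax, k s z₂ ≤ D)} =
      {s ∈ Set.Icc (0 : ℝ) ((2 * ustar + umax) / 4) |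
        g s uhat ≤ -C ∧ k s uhat ≤ D} := by
  subst huhat
  have hhalf : umax / 2 ∈ Icc (umax / 4) umax := ⟨by linarith, by linarith⟩
  have hmin : ∀ s, IsMinOn (g s) (Icc (umax / 4) umax) (umax / 2) ∧
      IsMinOn (k s) (Icc (umax / 4) umax) (umax / 2) := fun s => by
    simp only [isMinOn_iff, hg, hk]
    refine ⟨fun z hz => ?_, fun z hz => ?_⟩
    · linarith [flux_potential_le_half humax hf hF hustar_le hz.1]
    · linarith [flux_potential_le_half humax hf hF (c := 0) (by linarith) hz.1]
  refine ⟨fun s _ z hz => ⟨isMinOn_iff.mp (hmin s).1 z hz, isMinOn_iff.mp (hmin s).2 z hz⟩, ?_⟩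
  ext s
  simp only [mem_ofPred_eq, (hmin s).1.exists_mem_le_iff hhalf, (hmin s).2.exists_mem_le_iff hhalf]

/-- Compound (stability-and-invariance) left-boundary problem: if
`u* ≤ u_max/4` and `C, D ≥ 0`, then for every `s ∈ [0, u_max]` and every
`z ∈ ℐ_b = [u_max/4, u_max]` one has `g(s, z) ≥ g(s, û)` and
`k(s, z) ≥ k(s, û)`; consequently the compound constraint set
`{s ∈ 𝒞_a : (∃ z₁ ∈ ℐ_b, g(s, z₁) ≤ -C) ∧ (∃ z₂ ∈ ℐ_b, k(s, z₂) ≤ D)}`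
equals `{s ∈ 𝒞_a : g(s, û) ≤ -C ∧ k(s, û) ≤ D}`. -/
theorem compound_left_boundary_constraint_set
    (umax ustar uhat : ℝ) (f F : ℝ → ℝ) (g k : ℝ → ℝ → ℝ)
    (humax : 0 < umax)
    (hustar : ustar ∈ Set.Icc (0 : ℝ) umax)
    (hustar_le : ustar ≤ umax / 4)
    (huhat : uhat = umax / 2)
    (hf : ∀ u : ℝ, f u = u * (1 - u / umax))
    (hF : ∀ u : ℝ, F u = u ^ 2 / 2 - u ^ 3 / (3 * umax))
    (hg : ∀ s z : ℝ, g s z = (s - ustar) * f s - (z - ustar) * f z - F s + F z)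
    (hk : ∀ s z : ℝ, k s z = s * f s - z * f z - F s + F z)
    (C D : ℝ) (hC : 0 ≤ C) (hD : 0 ≤ D) :
    (∀ s ∈ Set.Icc (0 : ℝ) umax, ∀ z ∈ Set.Icc (umax / 4) umax,
      g s uhat ≤ g s z ∧ k s uhat ≤ k s z) ∧
    {s ∈ Set.Icc (0 : ℝ) ((2 * ustar + umax) / 4) |
        (∃ z₁ ∈ Set.Icc (umax / 4) umax, g s z₁ ≤ -C) ∧
        (∃ z₂ ∈ Set.Icc (umax / 4) umax, k s z₂ ≤ D)} =
      {s ∈ Set.Icc (0 : ℝ) ((2 * ustar + umax) / 4) |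
        g s uhat ≤ -C ∧ k s uhat ≤ D} :=
  compound_left_boundary_constraint_set_general umax ustar uhat f F g k humax hustar_le huhat hf hF
    hg hk C D
end
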